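/- Let n = 4f+1 be an odd prime with f odd, and suppose there exist integers x, y with n = x² + 4y², y = −1, such that the cyclotomic numbers of order 4 with respect to the generator α satisfy the f-odd table. Let e(0), e(1), e(2) ∈ {0,1} with e(0)+e(1)+e(2) ≡ 0 (mod 2), and let (a_0,a_1,a_2,a_3) be one of the tuples (s_2,s_1,s_2,s_1), (s_1,s_2,s_1,s_2), (s_6,s_2,s_6,s_2), (s_2,s_6,s_2,s_6), (s_5,s_4,s_5,s_4), (s_4,s_5,s_4,s_5), (s_3,s_5,s_3,s_5), (s_5,s_3,s_5,s_3). Then the quaternary sequence u of length 2n from Construction I satisfies R_u(τ) = ±2 for all 1 ≤ τ < 2n; in particular u is optimal. -/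

import Mathlib

/-- Cross-correlation of two sequences of length `N` over `ℤ_H`, with `ξ = exp(2πi/H)`. -/
noncomputable def crossCorr (H N : ℕ) (s t : ZMod N → ZMod H) (τ : ZMod N) : ℂ :=
  ∑ i ∈ Finset.range N,
    Complex.exp (2 * (Real.pi : ℂ) * Complex.I / (H : ℂ)) ^ ((s (i : ZMod N) - t ((i : ZMod N) + τ)).val)

/-- Cross-correlation of two binary sequences of length `N` (an integer). -/
def binCorr (N : ℕ) (s t : ZMod N → ZMod 2) (τ : ZMod N) : ℤ :=
  ∑ i ∈ Finset.range N, (-1 : ℤ) ^ ((s (i : ZMod N) + t ((i : ZMod N) + τ)).val)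

/-- Cross-correlation of two quaternary sequences of length `N`, with `ξ = √-1`. -/
noncomputable def quadCorr (N : ℕ) (s t : ZMod N → ZMod 4) (τ : ZMod N) : ℂ :=
  ∑ i ∈ Finset.range N, Complex.I ^ ((s (i : ZMod N) - t ((i : ZMod N) + τ)).val)

/-- Interleaving `u = I(a, b)`: `u(2i) = a(i)`, `u(2i+1) = b(i)`. -/
def interleaveSeq {H : ℕ} (n : ℕ) (a b : ZMod n → ZMod H) : ZMod (2 * n) → ZMod H :=
  fun k => if k.val % 2 = 0 then a ((k.val / 2 : ℕ) : ZMod n) else b ((k.val / 2 : ℕ) : ZMod n)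

/-- The inverse Gray mapping `φ⁻¹ : ℤ₂ × ℤ₂ → ℤ₄`. -/
def grayInv (a b : ZMod 2) : ZMod 4 :=
  if a = 0 then (if b = 0 then 0 else 1) else (if b = 0 then 3 else 2)

/-- Construction I: the quaternary sequence of length `2n` built from
`a₀, a₁, a₂, a₃` and bits `e₀, e₁, e₂`. -/
def constructionI (n : ℕ) (a0 a1 a2 a3 : ZMod n → ZMod 2)
    (e0 e1 e2 : ZMod 2) : ZMod (2 * n) → ZMod 4 :=
  let lam : ZMod n := (((n + 1) / 2 : ℕ) : ZMod n)
  let c := interleaveSeq n a0 (fun i => e0 + a1 (i + lam))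
  let d := interleaveSeq n (fun i => e1 + a2 i) (fun i => e2 + a3 (i + lam))
  fun i => grayInv (c i) (d i)

/-- The cyclotomic class `D_i` of order 4 w.r.t. the generator `α`. -/
def cycClass (n f : ℕ) (α : ZMod n) (i : ℕ) : Set (ZMod n) :=
  {x | ∃ t < f, x = α ^ (4 * t + i)}

/-- The cyclotomic number `(i, j)` of order 4: `|(D_i + 1) ∩ D_j|`. -/
noncomputable def cycNum (n f : ℕ) (α : ZMod n) (i j : ℕ) : ℕ :=
  Set.ncard {x : ZMod n | x - 1 ∈ cycClass n f α i ∧ x ∈ cycClass n f α j}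

open Classical in
/-- The binary sequence of length `n` with support set `D_i ∪ D_j`. -/
noncomputable def cycSeq (n f : ℕ) (α : ZMod n) (i j : ℕ) : ZMod n → ZMod 2 :=
  fun x => if x ∈ cycClass n f α i ∪ cycClass n f α j then 1 else 0

/-- Six binary sequences with supports `D₀∪D₁, D₀∪D₂, D₀∪D₃, D₁∪D₂, D₁∪D₃, D₂∪D₃`. -/
noncomputable def sixSeq (n f : ℕ) (α : ZMod n) : Fin 6 → ZMod n → ZMod 2
  | 0 => cycSeq n f α 0 1
  | 1 => cycSeq n f α 0 2
  | 2 => cycSeq n f α 0 3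
  | 3 => cycSeq n f α 1 2
  | 4 => cycSeq n f α 1 3
  | 5 => cycSeq n f α 2 3

/-- 16 times the cyclotomic numbers of order 4 in the `f` odd case. -/
def oddTable16 (n x y : ℤ) (i j : ℕ) : ℤ :=
  match i, j with
  | 0, 0 => n - 7 + 2*x
  | 0, 1 => n + 1 + 2*x - 8*y
  | 0, 2 => n + 1 - 6*x
  | 0, 3 => n + 1 + 2*x + 8*y
  | 1, 0 => n - 3 - 2*x
  | 1, 1 => n - 3 - 2*x
  | 1, 2 => n + 1 + 2*x + 8*y
  | 1, 3 => n + 1 + 2*x - 8*y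
  | 2, 0 => n - 7 + 2*x
  | 2, 1 => n - 3 - 2*x
  | 2, 2 => n - 7 + 2*x
  | 2, 3 => n - 3 - 2*x
  | 3, 0 => n - 3 - 2*x
  | 3, 1 => n + 1 + 2*x + 8*y
  | 3, 2 => n + 1 + 2*x - 8*y
  | 3, 3 => n - 3 - 2*x
  | _, _ => 0

/-- 16 times the cyclotomic numbers of order 4 in the `f` even case. -/
def evenTable16 (n x y : ℤ) (i j : ℕ) : ℤ :=
  match i, j with
  | 0, 0 => n - 11 - 6*x
  | 0, 1 => n - 3 + 2*x + 8*y
  | 0, 2 => n - 3 + 2*x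
  | 0, 3 => n - 3 + 2*x - 8*y
  | 1, 0 => n - 3 + 2*x + 8*y
  | 1, 1 => n - 3 + 2*x - 8*y
  | 1, 2 => n + 1 - 2*x
  | 1, 3 => n + 1 - 2*x
  | 2, 0 => n - 3 + 2*x
  | 2, 1 => n + 1 - 2*x
  | 2, 2 => n - 3 + 2*x
  | 2, 3 => n + 1 - 2*x
  | 3, 0 => n - 3 + 2*x - 8*y
  | 3, 1 => n + 1 - 2*x
  | 3, 2 => n + 1 - 2*x
  | 3, 3 => n - 3 + 2*x + 8*y
  | _, _ => 0

/-!
Write `u = φ⁻¹(c, d)`. Then `2 R_u = R_c + R_d + i (R_{c,d} - R_{d,c})`, and since `c` and `d`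
interleave `a₀` and `L^λ a₁` (up to the constant bits `eᵢ`), their correlations split into
correlations of `a₀`, `a₁` at half the shift. As `2λ = 1` in `ℤ/n` and `e₀ + e₁ + e₂ = 0`, the
imaginary part cancels, `R_u(2σ) = R_{a₀}(σ) + R_{a₁}(σ)` and
`R_u(2σ+1) = ±(R_{a₀,a₁}(ρ) + R_{a₁,a₀}(ρ))` with `ρ = σ + λ`.

For `s`, `t` supported on `D_a ∪ D_b` and `D_c ∪ D_d`, counting agreements gives
`R_{s,t}(ρ) = n - 8f + 4 |(D_a ∪ D_b) ∩ (D_c ∪ D_d - ρ)|`, and for `ρ ∈ D_k` multiplication by `ρ`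
turns each `|D_i ∩ (D_j - ρ)|` into the cyclotomic number `(i - k, j - k)`. Reading these off the
f-odd table (with `y = -1`) gives `-2` for the even sums and `±2` for the odd ones; at `ρ = 0`
the two supports share exactly one class, so each cross-correlation is `n - 8f + 4f = 1`.
-/

open Finset

lemma I_pow_val (w : ZMod 4) : Complex.I ^ w.val =
    if w = 0 then 1 else if w = 1 then Complex.I else if w = 2 then -1 else -Complex.I := by
  obtain rfl | rfl | rfl | rfl : w = 0 ∨ w = 1 ∨ w = 2 ∨ w = 3 := by revert w; decide
  all_goals simp +decide [ZMod.val_ofNat, ZMod.val_one, pow_succ]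

lemma neg_one_pow_val (z : ZMod 2) : (-1 : ℤ) ^ z.val = if z = 0 then 1 else -1 := by
  obtain rfl | rfl : z = 0 ∨ z = 1 := by revert z; decide
  all_goals rfl

lemma neg_one_pow_val_add (a b : ZMod 2) :
    (-1 : ℤ) ^ (a + b).val = (-1) ^ a.val * (-1) ^ b.val := by
  simp only [neg_one_pow_val]
  obtain rfl | rfl : a = 0 ∨ a = 1 := by revert a; decide
  all_goals obtain rfl | rfl : b = 0 ∨ b = 1 := by revert b; decide
  all_goals rfl

lemma neg_one_pow_val_mul_self (e : ZMod 2) : (-1 : ℤ) ^ e.val * (-1) ^ e.val = 1 := by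
  rw [← mul_pow]; simp

lemma two_mul_I_pow_grayInv_sub (a b a' b' : ZMod 2) :
    2 * Complex.I ^ (grayInv a b - grayInv a' b').val
      = ((-1 : ℤ) ^ (b + b').val + (-1 : ℤ) ^ (a + a').val : ℤ)
        + Complex.I * ((-1 : ℤ) ^ (a + b').val - (-1 : ℤ) ^ (b + a').val : ℤ) := by
  simp only [I_pow_val, neg_one_pow_val]
  obtain rfl | rfl : a = 0 ∨ a = 1 := by revert a; decide
  all_goals obtain rfl | rfl : b = 0 ∨ b = 1 := by revert b; decide
  all_goals obtain rfl | rfl : a' = 0 ∨ a' = 1 := by revert a'; decide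
  all_goals obtain rfl | rfl : b' = 0 ∨ b' = 1 := by revert b'; decide
  all_goals simp +decide [mul_comm]

theorem two_mul_quadCorr_grayInv {N : ℕ} (c d c' d' : ZMod N → ZMod 2) (τ : ZMod N) :
    2 * quadCorr N (fun i => grayInv (c i) (d i)) (fun i => grayInv (c' i) (d' i)) τ
      = (binCorr N d d' τ + binCorr N c c' τ : ℤ)
        + Complex.I * (binCorr N c d' τ - binCorr N d c' τ : ℤ) := by
  simp only [quadCorr, binCorr, mul_sum, two_mul_I_pow_grayInv_sub]
  push_cast
  rw [sum_add_distrib, sum_add_distrib, ← sum_sub_distrib, mul_sum]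

section BinCorr

variable {N : ℕ}

theorem binCorr_eq_sum_univ [NeZero N] (s t : ZMod N → ZMod 2) (τ : ZMod N) :
    binCorr N s t τ = ∑ i : ZMod N, (-1 : ℤ) ^ (s i + t (i + τ)).val := by
  refine sum_bij' (fun i _ => (i : ZMod N)) (fun z _ => z.val) (by simp)
    (fun z _ => mem_range.2 (ZMod.val_lt z)) (fun i hi => ZMod.val_cast_of_lt (mem_range.1 hi))
    (fun z _ => ZMod.natCast_zmod_val z) (fun _ _ => rfl)

theorem binCorr_const_add_left (e : ZMod 2) (s t : ZMod N → ZMod 2) (τ : ZMod N) :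
    binCorr N (fun i => e + s i) t τ = (-1) ^ e.val * binCorr N s t τ := by
  simp only [binCorr, mul_sum, add_assoc, neg_one_pow_val_add]

theorem binCorr_const_add_right (e : ZMod 2) (s t : ZMod N → ZMod 2) (τ : ZMod N) :
    binCorr N s (fun i => e + t i) τ = (-1) ^ e.val * binCorr N s t τ := by
  simp only [binCorr, mul_sum, add_left_comm _ e, neg_one_pow_val_add]

theorem binCorr_comp_add_right (s t : ZMod N → ZMod 2) (l τ : ZMod N) :
    binCorr N s (fun i => t (i + l)) τ = binCorr N s t (τ + l) := by
  simp only [binCorr, add_assoc]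

theorem binCorr_comp_add_left [NeZero N] (s t : ZMod N → ZMod 2) (l τ : ZMod N) :
    binCorr N (fun i => s (i + l)) t τ = binCorr N s t (τ - l) := by
  rw [binCorr_eq_sum_univ, binCorr_eq_sum_univ,
    ← Equiv.sum_comp (Equiv.addRight l) (fun i => (-1 : ℤ) ^ (s i + t (i + (τ - l))).val)]
  simp only [Equiv.coe_addRight, add_assoc, add_sub_cancel]

theorem binCorr_comp_add_comp_add [NeZero N] (s t : ZMod N → ZMod 2) (l τ : ZMod N) :
    binCorr N (fun i => s (i + l)) (fun i => t (i + l)) τ = binCorr N s t τ := by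
  rw [binCorr_comp_add_left, binCorr_comp_add_right, sub_add_cancel]

end BinCorr

section Interleave

variable {H n : ℕ}

theorem interleaveSeq_natCast (a b : ZMod n → ZMod H) (m : ℕ) :
    interleaveSeq n a b (m : ZMod (2 * n))
      = if m % 2 = 0 then a ((m / 2 : ℕ) : ZMod n) else b ((m / 2 : ℕ) : ZMod n) := by
  simp only [interleaveSeq, ZMod.val_natCast, Nat.mod_mod_of_dvd m (dvd_mul_right 2 n),
    Nat.mod_mul_right_div_self, ZMod.natCast_mod]

theorem interleaveSeq_two_mul (a b : ZMod n → ZMod H) (i : ℕ) :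
    interleaveSeq n a b ((2 * i : ℕ) : ZMod (2 * n)) = a i := by
  rw [interleaveSeq_natCast]; simp

theorem interleaveSeq_two_mul_add_one (a b : ZMod n → ZMod H) (i : ℕ) :
    interleaveSeq n a b ((2 * i + 1 : ℕ) : ZMod (2 * n)) = b i := by
  rw [interleaveSeq_natCast, if_neg (by omega), show (2 * i + 1) / 2 = i by omega]

end Interleave

lemma sum_range_two_mul {M : Type*} [AddCommMonoid M] (g : ℕ → M) (m : ℕ) :
    ∑ i ∈ range (2 * m), g i = ∑ i ∈ range m, g (2 * i) + ∑ i ∈ range m, g (2 * i + 1) := by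
  induction m with
  | zero => simp
  | succ m ih =>
    rw [mul_add, mul_one, sum_range_succ, sum_range_succ, ih, sum_range_succ, sum_range_succ]
    abel

section InterleaveCorr

variable {n : ℕ} (a b a' b' : ZMod n → ZMod 2) (σ : ℕ)

theorem binCorr_interleaveSeq_two_mul :
    binCorr (2 * n) (interleaveSeq n a b) (interleaveSeq n a' b') ((2 * σ : ℕ) : ZMod (2 * n))
      = binCorr n a a' σ + binCorr n b b' σ := by
  rw [binCorr, sum_range_two_mul]
  congr 1 <;> refine sum_congr rfl fun i _ => ?_
  · rw [← Nat.cast_add, ← mul_add, interleaveSeq_two_mul, interleaveSeq_two_mul, Nat.cast_add]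
  · rw [← Nat.cast_add, show 2 * i + 1 + 2 * σ = 2 * (i + σ) + 1 by ring,
      interleaveSeq_two_mul_add_one, interleaveSeq_two_mul_add_one, Nat.cast_add]

theorem binCorr_interleaveSeq_two_mul_add_one :
    binCorr (2 * n) (interleaveSeq n a b) (interleaveSeq n a' b') ((2 * σ + 1 : ℕ) : ZMod (2 * n))
      = binCorr n a b' σ + binCorr n b a' (σ + 1 : ℕ) := by
  rw [binCorr, sum_range_two_mul]
  congr 1 <;> refine sum_congr rfl fun i _ => ?_
  · rw [← Nat.cast_add, show 2 * i + (2 * σ + 1) = 2 * (i + σ) + 1 by ring,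
      interleaveSeq_two_mul, interleaveSeq_two_mul_add_one, Nat.cast_add]
  · rw [← Nat.cast_add, show 2 * i + 1 + (2 * σ + 1) = 2 * (i + (σ + 1)) by ring,
      interleaveSeq_two_mul_add_one, interleaveSeq_two_mul, Nat.cast_add]

end InterleaveCorr

lemma natCast_half_add_self {n : ℕ} (hn : Odd n) :
    (((n + 1) / 2 : ℕ) : ZMod n) + (((n + 1) / 2 : ℕ) : ZMod n) = 1 := by
  rw [← Nat.cast_add, show (n + 1) / 2 + (n + 1) / 2 = n + 1 by obtain ⟨k, rfl⟩ := hn; omega]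
  simp

section ConstructionI

variable {n : ℕ} (a0 a1 : ZMod n → ZMod 2) (e0 e1 e2 : ZMod 2) (σ : ℕ)

theorem two_mul_quadCorr_constructionI (a2 a3 : ZMod n → ZMod 2) (τ : ZMod (2 * n)) :
    let l : ZMod n := (((n + 1) / 2 : ℕ) : ZMod n)
    let c := interleaveSeq n a0 fun i => e0 + a1 (i + l)
    let d := interleaveSeq n (fun i => e1 + a2 i) fun i => e2 + a3 (i + l)
    2 * quadCorr (2 * n) (constructionI n a0 a1 a2 a3 e0 e1 e2)
        (constructionI n a0 a1 a2 a3 e0 e1 e2) τ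
      = (binCorr (2 * n) d d τ + binCorr (2 * n) c c τ : ℤ)
        + Complex.I * (binCorr (2 * n) c d τ - binCorr (2 * n) d c τ : ℤ) :=
  two_mul_quadCorr_grayInv _ _ _ _ τ

theorem quadCorr_constructionI_two_mul [NeZero n] :
    quadCorr (2 * n) (constructionI n a0 a1 a0 a1 e0 e1 e2)
      (constructionI n a0 a1 a0 a1 e0 e1 e2) ((2 * σ : ℕ) : ZMod (2 * n))
      = (binCorr n a0 a0 σ + binCorr n a1 a1 σ : ℤ) := by
  have h := two_mul_quadCorr_constructionI a0 a1 e0 e1 e2 a0 a1 ((2 * σ : ℕ) : ZMod (2 * n))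
  simp only [binCorr_interleaveSeq_two_mul, binCorr_const_add_left, binCorr_const_add_right,
    binCorr_comp_add_comp_add, ← mul_assoc, neg_one_pow_val_mul_self, one_mul] at h
  push_cast at h ⊢
  linear_combination h / 2

theorem quadCorr_constructionI_two_mul_add_one [NeZero n] (hn : Odd n) (he : e0 + e1 + e2 = 0) :
    quadCorr (2 * n) (constructionI n a0 a1 a0 a1 e0 e1 e2)
      (constructionI n a0 a1 a0 a1 e0 e1 e2) ((2 * σ + 1 : ℕ) : ZMod (2 * n))
      = ((-1) ^ e0.val * (binCorr n a0 a1 (σ + (((n + 1) / 2 : ℕ) : ZMod n))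
          + binCorr n a1 a0 (σ + (((n + 1) / 2 : ℕ) : ZMod n))) : ℤ) := by
  have h := two_mul_quadCorr_constructionI a0 a1 e0 e1 e2 a0 a1 ((2 * σ + 1 : ℕ) : ZMod (2 * n))
  set l : ZMod n := (((n + 1) / 2 : ℕ) : ZMod n)
  have hl : ((σ + 1 : ℕ) : ZMod n) - l = σ + l := by
    push_cast; linear_combination -natCast_half_add_self hn
  simp only [binCorr_interleaveSeq_two_mul_add_one, binCorr_const_add_left, binCorr_const_add_right,
    binCorr_comp_add_right, binCorr_comp_add_left, hl, ← mul_assoc] at h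
  have h12 := congrArg (Int.cast : ℤ → ℂ) (neg_one_pow_val_add e1 e2)
  have h01 := congrArg (Int.cast : ℤ → ℂ) (neg_one_pow_val_add e0 e1)
  rw [show e1 + e2 = e0 by grind] at h12
  rw [show e0 + e1 = e2 by grind] at h01
  set X := binCorr n a0 a1 (σ + l)
  set Y := binCorr n a1 a0 (σ + l)
  push_cast at h h12 h01 ⊢
  linear_combination (h - (X + Y) * h12 - Complex.I * (Y - X) * h01) / 2

end ConstructionI

lemma neg_one_pow_val_add_eq_boole (a b : ZMod 2) :
    (-1 : ℤ) ^ (a + b).val = 1 - 2 * (if a ≠ 0 then 1 else 0) - 2 * (if b ≠ 0 then 1 else 0)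
      + 4 * (if a ≠ 0 ∧ b ≠ 0 then 1 else 0) := by
  obtain rfl | rfl : a = 0 ∨ a = 1 := by revert a; decide
  all_goals obtain rfl | rfl : b = 0 ∨ b = 1 := by revert b; decide
  all_goals rfl

lemma sum_boole_eq_ncard {α : Type*} [Fintype α] (p : α → Prop) [DecidablePred p] :
    ∑ i, (if p i then 1 else 0 : ℤ) = ({i | p i} : Set α).ncard := by
  rw [sum_boole, Set.ncard_eq_toFinset_card', Set.toFinset_ofPred]

noncomputable def shiftOverlap {G : Type*} [Add G] (S T : Set G) (ρ : G) : ℕ :=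
  (S ∩ (· + ρ) ⁻¹' T).ncard

theorem binCorr_eq_ncard_support {n : ℕ} [NeZero n] (s t : ZMod n → ZMod 2) (ρ : ZMod n) :
    binCorr n s t ρ = n - 2 * (Function.support s).ncard - 2 * (Function.support t).ncard
      + 4 * shiftOverlap (Function.support s) (Function.support t) ρ := by
  rw [binCorr_eq_sum_univ]
  simp only [neg_one_pow_val_add_eq_boole, sum_add_distrib, sum_sub_distrib, ← mul_sum,
    sum_const, card_univ, ZMod.card, nsmul_eq_mul, mul_one]
  rw [Fintype.sum_equiv (Equiv.addRight ρ) (fun i => if t (i + ρ) ≠ 0 then (1 : ℤ) else 0)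
    (fun i => if t i ≠ 0 then 1 else 0) (fun _ => rfl),
    sum_boole_eq_ncard, sum_boole_eq_ncard, sum_boole_eq_ncard]
  rfl

section ShiftOverlap

variable {G : Type*} [Add G] [Finite G]

theorem shiftOverlap_union_left {S₁ S₂ : Set G} (h : Disjoint S₁ S₂) (T : Set G) (ρ : G) :
    shiftOverlap (S₁ ∪ S₂) T ρ = shiftOverlap S₁ T ρ + shiftOverlap S₂ T ρ := by
  rw [shiftOverlap, Set.union_inter_distrib_right,
    Set.ncard_union_eq (h.mono Set.inter_subset_left Set.inter_subset_left)]
  rfl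

theorem shiftOverlap_union_right (S : Set G) {T₁ T₂ : Set G} (h : Disjoint T₁ T₂) (ρ : G) :
    shiftOverlap S (T₁ ∪ T₂) ρ = shiftOverlap S T₁ ρ + shiftOverlap S T₂ ρ := by
  rw [shiftOverlap, Set.preimage_union, Set.inter_union_distrib_left,
    Set.ncard_union_eq ((h.preimage _).mono Set.inter_subset_right Set.inter_subset_right)]
  rfl

end ShiftOverlap

theorem shiftOverlap_zero {G : Type*} [AddZeroClass G] (S T : Set G) :
    shiftOverlap S T 0 = (S ∩ T).ncard := by
  simp [shiftOverlap]

section CycClass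

variable {n f : ℕ} {α : ZMod n} (hord : orderOf α = 4 * f) (hf : 0 < f)
include hord hf

theorem mem_cycClass_iff {i : ℕ} {x : ZMod n} :
    x ∈ cycClass n f α i ↔ ∃ m, x = α ^ (4 * m + i) := by
  refine ⟨fun ⟨t, _, ht⟩ => ⟨t, ht⟩, fun ⟨m, hm⟩ => ⟨m % f, Nat.mod_lt _ hf, ?_⟩⟩
  rw [hm, IsOfFinOrder.pow_eq_pow_iff_modEq (orderOf_pos_iff.1 (by omega)), hord]
  exact ((Nat.mod_modEq m f).mul_left' 4).symm.add_right i

theorem cycClass_add_four_mul (i j : ℕ) : cycClass n f α (i + 4 * j) = cycClass n f α i := by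
  obtain ⟨g, rfl⟩ : ∃ g, f = g + 1 := ⟨f - 1, by omega⟩
  ext x
  simp only [mem_cycClass_iff hord hf]
  constructor
  · rintro ⟨m, rfl⟩
    exact ⟨m + j, by ring_nf⟩
  · rintro ⟨m, rfl⟩
    refine ⟨m + g * j, ?_⟩
    rw [show 4 * (m + g * j) + (i + 4 * j) = 4 * m + i + orderOf α * j by rw [hord]; ring,
      pow_add _ (4 * m + i), pow_mul α (orderOf α), pow_orderOf_eq_one, one_pow, mul_one]

theorem pow_mem_cycClass_self (m : ℕ) : α ^ m ∈ cycClass n f α m :=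
  (mem_cycClass_iff hord hf).2 ⟨0, by simp⟩

theorem mul_mem_cycClass {i j : ℕ} {x y : ZMod n} (hx : x ∈ cycClass n f α i)
    (hy : y ∈ cycClass n f α j) : x * y ∈ cycClass n f α (i + j) := by
  obtain ⟨m, rfl⟩ := (mem_cycClass_iff hord hf).1 hx
  obtain ⟨m', rfl⟩ := (mem_cycClass_iff hord hf).1 hy
  exact (mem_cycClass_iff hord hf).2 ⟨m + m', by rw [← pow_add]; ring_nf⟩

theorem pow_mem_cycClass {i : ℕ} {x : ZMod n} (hx : x ∈ cycClass n f α i) (k : ℕ) :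
    x ^ k ∈ cycClass n f α (i * k) := by
  obtain ⟨m, rfl⟩ := (mem_cycClass_iff hord hf).1 hx
  exact (mem_cycClass_iff hord hf).2 ⟨m * k, by rw [← pow_mul]; ring_nf⟩

theorem pow_four_mul_eq_one_of_mem_cycClass {i : ℕ} {x : ZMod n} (hx : x ∈ cycClass n f α i) :
    x ^ (4 * f) = 1 := by
  obtain ⟨m, rfl⟩ := (mem_cycClass_iff hord hf).1 hx
  rw [← pow_mul, mul_comm, pow_mul, ← hord, pow_orderOf_eq_one, one_pow]

theorem mul_mem_cycClass_iff {k p : ℕ} {ρ x : ZMod n} (hρ : ρ ∈ cycClass n f α k) :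
    ρ * x ∈ cycClass n f α (k + p) ↔ x ∈ cycClass n f α p := by
  refine ⟨fun h => ?_, mul_mem_cycClass hord hf hρ⟩
  obtain ⟨g, rfl⟩ : ∃ g, f = g + 1 := ⟨f - 1, by omega⟩
  have hx : x = ρ ^ (4 * g + 3) * (ρ * x) := by
    rw [← mul_assoc, ← pow_succ, show 4 * g + 3 + 1 = 4 * (g + 1) by ring,
      pow_four_mul_eq_one_of_mem_cycClass hord hf hρ, one_mul]
  have := mul_mem_cycClass hord hf (pow_mem_cycClass hord hf hρ (4 * g + 3)) h
  rwa [show k * (4 * g + 3) + (k + p) = p + 4 * (k * (g + 1)) by ring,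
    cycClass_add_four_mul hord hf, ← hx] at this

theorem eq_of_mem_cycClass {i j : ℕ} (hi : i < 4) (hj : j < 4) {x : ZMod n}
    (hxi : x ∈ cycClass n f α i) (hxj : x ∈ cycClass n f α j) : i = j := by
  obtain ⟨m, rfl⟩ := (mem_cycClass_iff hord hf).1 hxi
  obtain ⟨m', hm'⟩ := (mem_cycClass_iff hord hf).1 hxj
  rw [IsOfFinOrder.pow_eq_pow_iff_modEq (orderOf_pos_iff.1 (by omega)), hord] at hm'
  have := hm'.of_mul_right f
  unfold Nat.ModEq at this
  omega

theorem ncard_cycClass (i : ℕ) : (cycClass n f α i).ncard = f := by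
  have himage : cycClass n f α i = (fun t => α ^ (4 * t + i)) '' ↑(range f) := by
    ext x
    simp [cycClass, eq_comm]
  rw [himage, Set.InjOn.ncard_image, Set.ncard_coe_finset, card_range]
  intro t ht t' ht' h
  rw [IsOfFinOrder.pow_eq_pow_iff_modEq (orderOf_pos_iff.1 (by omega)), hord] at h
  exact (Nat.ModEq.mul_left_cancel' (by norm_num) (Nat.ModEq.add_right_cancel' i h)).eq_of_lt_of_lt
    (by simpa using ht) (by simpa using ht')

end CycClass

theorem orderOf_eq_sub_one_of_forall_eq_pow {p : ℕ} [Fact p.Prime] (hp : 2 < p) {α : ZMod p}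
    (hα : ∀ z : ZMod p, z ≠ 0 → ∃ k : ℕ, z = α ^ k) : orderOf α = p - 1 := by
  have : Fact (2 < p) := ⟨hp⟩
  have hα0 : α ≠ 0 := by
    rintro rfl
    obtain ⟨_ | k, hk⟩ := hα (-1) (neg_ne_zero.2 one_ne_zero)
    · exact ZMod.neg_one_ne_one (by simpa using hk)
    · simp at hk
  have hgen : ∀ u : (ZMod p)ˣ, u ∈ Subgroup.zpowers (Units.mk0 α hα0) := fun u => by
    obtain ⟨k, hk⟩ := hα u u.ne_zero
    exact ⟨k, Units.ext (by simp [hk])⟩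
  rw [← Units.val_mk0 hα0, orderOf_units, orderOf_eq_card_of_forall_mem_zpowers hgen,
    Nat.card_eq_fintype_card, ZMod.card_units]

section CycClassOverlap

variable {n f : ℕ} {α : ZMod n} (hord : orderOf α = 4 * f) (hf : 0 < f)
include hord hf

theorem cycClass_congr_mod {i j : ℕ} (h : i % 4 = j % 4) :
    cycClass n f α i = cycClass n f α j := by
  rw [← Nat.mod_add_div i 4, ← Nat.mod_add_div j 4, cycClass_add_four_mul hord hf,
    cycClass_add_four_mul hord hf, h]

theorem exists_mem_cycClass (hα : ∀ z : ZMod n, z ≠ 0 → ∃ k : ℕ, z = α ^ k) {z : ZMod n}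
    (hz : z ≠ 0) : ∃ k < 4, z ∈ cycClass n f α k := by
  obtain ⟨m, rfl⟩ := hα z hz
  refine ⟨m % 4, Nat.mod_lt _ (by norm_num), ?_⟩
  rw [cycClass_congr_mod hord hf (Nat.mod_mod m 4)]
  exact pow_mem_cycClass_self hord hf m

theorem disjoint_cycClass {i j : ℕ} (hi : i < 4) (hj : j < 4) (hij : i ≠ j) :
    Disjoint (cycClass n f α i) (cycClass n f α j) :=
  Set.disjoint_left.2 fun _ hxi hxj => hij (eq_of_mem_cycClass hord hf hi hj hxi hxj)

theorem shiftOverlap_cycClass_add {k : ℕ} {ρ : ZMod n} (hρ : ρ ∈ cycClass n f α k) (p q : ℕ) :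
    shiftOverlap (cycClass n f α (k + p)) (cycClass n f α (k + q)) ρ = cycNum n f α p q := by
  have hu : IsUnit ρ :=
    IsUnit.of_pow_eq_one (pow_four_mul_eq_one_of_mem_cycClass hord hf hρ) (by omega)
  let e : ZMod n ≃ ZMod n := (Equiv.subRight 1).trans hu.unit.mulLeft
  have hpre : {x | x - 1 ∈ cycClass n f α p ∧ x ∈ cycClass n f α q}
      = e ⁻¹' (cycClass n f α (k + p) ∩ (· + ρ) ⁻¹' cycClass n f α (k + q)) := by
    ext x
    change _ ↔ ρ * (x - 1) ∈ cycClass n f α (k + p) ∧ ρ * (x - 1) + ρ ∈ cycClass n f α (k + q)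
    rw [show ρ * (x - 1) + ρ = ρ * x by ring, mul_mem_cycClass_iff hord hf hρ,
      mul_mem_cycClass_iff hord hf hρ]
    rfl
  rw [cycNum, hpre, Set.ncard_preimage_of_injective_subset_range e.injective (by simp)]
  rfl

theorem shiftOverlap_cycClass {k : ℕ} (hk : k < 4) {ρ : ZMod n} (hρ : ρ ∈ cycClass n f α k)
    (a c : ℕ) : shiftOverlap (cycClass n f α a) (cycClass n f α c) ρ
      = cycNum n f α ((a + 4 - k) % 4) ((c + 4 - k) % 4) := by
  rw [← shiftOverlap_cycClass_add hord hf hρ,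
    cycClass_congr_mod hord hf (i := a) (j := k + (a + 4 - k) % 4) (by omega),
    cycClass_congr_mod hord hf (i := c) (j := k + (c + 4 - k) % 4) (by omega)]

theorem shiftOverlap_cycClass_zero {a c : ℕ} (ha : a < 4) (hc : c < 4) :
    shiftOverlap (cycClass n f α a) (cycClass n f α c) 0 = if a = c then f else 0 := by
  rw [shiftOverlap_zero]
  split_ifs with h
  · rw [h, Set.inter_self, ncard_cycClass hord hf]
  · rw [(disjoint_cycClass hord hf ha hc h).inter_eq, Set.ncard_empty]

omit hord hf in
theorem support_cycSeq (a b : ℕ) :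
    Function.support (cycSeq n f α a b) = cycClass n f α a ∪ cycClass n f α b := by
  ext x
  by_cases hx : x ∈ cycClass n f α a ∪ cycClass n f α b <;> simp [cycSeq, hx]

theorem binCorr_cycSeq [NeZero n] {a b c d : ℕ} (ha : a < 4) (hb : b < 4) (hc : c < 4)
    (hd : d < 4) (hab : a ≠ b) (hcd : c ≠ d) (ρ : ZMod n) :
    binCorr n (cycSeq n f α a b) (cycSeq n f α c d) ρ
      = n - 8 * f + 4 * (shiftOverlap (cycClass n f α a) (cycClass n f α c) ρ
          + shiftOverlap (cycClass n f α a) (cycClass n f α d) ρ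
          + shiftOverlap (cycClass n f α b) (cycClass n f α c) ρ
          + shiftOverlap (cycClass n f α b) (cycClass n f α d) ρ : ℕ) := by
  have hdab := disjoint_cycClass hord hf ha hb hab
  have hdcd := disjoint_cycClass hord hf hc hd hcd
  rw [binCorr_eq_ncard_support, support_cycSeq, support_cycSeq, Set.ncard_union_eq hdab,
    Set.ncard_union_eq hdcd, shiftOverlap_union_left hdab, shiftOverlap_union_right _ hdcd,
    shiftOverlap_union_right _ hdcd]
  simp only [ncard_cycClass hord hf]
  push_cast
  ring

theorem four_mul_binCorr_cycSeq [NeZero n] {x y : ℤ}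
    (hTab : ∀ i < 4, ∀ j < 4, 16 * (cycNum n f α i j : ℤ) = oddTable16 n x y i j)
    {k : ℕ} (hk : k < 4) {ρ : ZMod n} (hρ : ρ ∈ cycClass n f α k) {a b c d : ℕ} (ha : a < 4)
    (hb : b < 4) (hc : c < 4) (hd : d < 4) (hab : a ≠ b) (hcd : c ≠ d) :
    4 * binCorr n (cycSeq n f α a b) (cycSeq n f α c d) ρ
      = 4 * (n - 8 * f) + ∑ i ∈ {a, b}, ∑ j ∈ {c, d},
          oddTable16 n x y ((i + 4 - k) % 4) ((j + 4 - k) % 4) := by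
  have hT (i j : ℕ) : oddTable16 n x y ((i + 4 - k) % 4) ((j + 4 - k) % 4)
      = 16 * (shiftOverlap (cycClass n f α i) (cycClass n f α j) ρ : ℤ) := by
    rw [shiftOverlap_cycClass hord hf hk hρ, hTab _ (by omega) _ (by omega)]
  simp only [binCorr_cycSeq hord hf ha hb hc hd hab hcd, sum_pair hab, sum_pair hcd, hT]
  push_cast
  ring

end CycClassOverlap

/-- `(p, q, r, s)` encodes `(a₀, a₁) = (D_p ∪ D_q, D_r ∪ D_s)`, as in the list of the theorem. -/
def admissibleIndices : Finset (ℕ × ℕ × ℕ × ℕ) :=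
  {(0, 2, 0, 1), (0, 1, 0, 2), (2, 3, 0, 2), (0, 2, 2, 3),
    (1, 3, 1, 2), (1, 2, 1, 3), (0, 3, 1, 3), (1, 3, 0, 3)}

theorem admissibleIndices_bounds {p q r s : ℕ} (h : (p, q, r, s) ∈ admissibleIndices) :
    p < 4 ∧ q < 4 ∧ r < 4 ∧ s < 4 ∧ p ≠ q ∧ r ≠ s := by
  simp only [admissibleIndices, mem_insert, mem_singleton, Prod.mk.injEq] at h
  omega

section AdmissiblePairs

variable {n f : ℕ} [NeZero n] {α : ZMod n} (hord : orderOf α = 4 * f) (hf : 0 < f)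
  (hnf : n = 4 * f + 1) {x : ℤ}
  (hTab : ∀ i < 4, ∀ j < 4, 16 * (cycNum n f α i j : ℤ) = oddTable16 n x (-1) i j)
  {p q r s : ℕ} (hpqrs : (p, q, r, s) ∈ admissibleIndices)
include hord hf hnf hTab hpqrs

theorem binCorr_admissible_sums {k : ℕ} (hk : k < 4) {ρ : ZMod n}
    (hρ : ρ ∈ cycClass n f α k) :
    binCorr n (cycSeq n f α p q) (cycSeq n f α p q) ρ
        + binCorr n (cycSeq n f α r s) (cycSeq n f α r s) ρ = -2 ∧
      (binCorr n (cycSeq n f α p q) (cycSeq n f α r s) ρ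
        + binCorr n (cycSeq n f α r s) (cycSeq n f α p q) ρ = 2 ∨
      binCorr n (cycSeq n f α p q) (cycSeq n f α r s) ρ
        + binCorr n (cycSeq n f α r s) (cycSeq n f α p q) ρ = -2) := by
  obtain ⟨hp, hq, hr, hs, hpq, hrs⟩ := admissibleIndices_bounds hpqrs
  have h1 := four_mul_binCorr_cycSeq hord hf hTab hk hρ hp hq hp hq hpq hpq
  have h2 := four_mul_binCorr_cycSeq hord hf hTab hk hρ hr hs hr hs hrs hrs
  have h3 := four_mul_binCorr_cycSeq hord hf hTab hk hρ hp hq hr hs hpq hrs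
  have h4 := four_mul_binCorr_cycSeq hord hf hTab hk hρ hr hs hp hq hrs hpq
  simp only [sum_pair hpq, sum_pair hrs] at h1 h2 h3 h4
  simp only [admissibleIndices, mem_insert, mem_singleton, Prod.mk.injEq] at hpqrs
  rcases hpqrs with h | h | h | h | h | h | h | h <;> obtain ⟨rfl, rfl, rfl, rfl⟩ := h <;>
  interval_cases k <;>
    simp only [Nat.reduceAdd, Nat.reduceSub, Nat.reduceMod, oddTable16] at h1 h2 h3 h4 <;> omega

omit hTab in
theorem binCorr_admissible_cross_sum_zero :
    binCorr n (cycSeq n f α p q) (cycSeq n f α r s) 0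
      + binCorr n (cycSeq n f α r s) (cycSeq n f α p q) 0 = 2 := by
  obtain ⟨hp, hq, hr, hs, hpq, hrs⟩ := admissibleIndices_bounds hpqrs
  simp only [binCorr_cycSeq hord hf hp hq hr hs hpq hrs, binCorr_cycSeq hord hf hr hs hp hq hrs hpq,
    shiftOverlap_cycClass_zero hord hf, hp, hq, hr, hs]
  simp only [admissibleIndices, mem_insert, mem_singleton, Prod.mk.injEq] at hpqrs
  rcases hpqrs with h | h | h | h | h | h | h | h <;> obtain ⟨rfl, rfl, rfl, rfl⟩ := h <;>
    simp <;> omega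

end AdmissiblePairs

theorem quadCorr_constructionI_cycSeq {n f : ℕ} [NeZero n] {α : ZMod n}
    (hord : orderOf α = 4 * f) (hf : 0 < f) (hnf : n = 4 * f + 1)
    (hα : ∀ z : ZMod n, z ≠ 0 → ∃ k : ℕ, z = α ^ k) {x : ℤ}
    (hTab : ∀ i < 4, ∀ j < 4, 16 * (cycNum n f α i j : ℤ) = oddTable16 n x (-1) i j)
    {p q r s : ℕ} (hpqrs : (p, q, r, s) ∈ admissibleIndices) {e0 e1 e2 : ZMod 2}
    (he : e0 + e1 + e2 = 0) {τ : ℕ} (hτ1 : 1 ≤ τ) (hτ2 : τ < 2 * n) :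
    let u := constructionI n (cycSeq n f α p q) (cycSeq n f α r s) (cycSeq n f α p q)
      (cycSeq n f α r s) e0 e1 e2
    quadCorr (2 * n) u u τ = 2 ∨ quadCorr (2 * n) u u τ = -2 := by
  intro u
  obtain ⟨σ, rfl | rfl⟩ := Nat.even_or_odd' τ
  · have hσ : (σ : ZMod n) ≠ 0 := by
      rw [Ne, ZMod.natCast_eq_zero_iff]
      exact Nat.not_dvd_of_pos_of_lt (by omega) (by omega)
    obtain ⟨k, hk, hρ⟩ := exists_mem_cycClass hord hf hα hσ
    rw [quadCorr_constructionI_two_mul,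
      (binCorr_admissible_sums hord hf hnf hTab hpqrs hk hρ).1]
    norm_num
  · rw [quadCorr_constructionI_two_mul_add_one _ _ _ _ _ _ ⟨2 * f, by omega⟩ he]
    set ρ : ZMod n := σ + (((n + 1) / 2 : ℕ) : ZMod n)
    have hsum : binCorr n (cycSeq n f α p q) (cycSeq n f α r s) ρ
          + binCorr n (cycSeq n f α r s) (cycSeq n f α p q) ρ = 2 ∨
        binCorr n (cycSeq n f α p q) (cycSeq n f α r s) ρ
          + binCorr n (cycSeq n f α r s) (cycSeq n f α p q) ρ = -2 := by
      by_cases hρ : ρ = 0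
      · exact .inl (hρ ▸ binCorr_admissible_cross_sum_zero hord hf hnf hpqrs)
      · obtain ⟨k, hk, hρk⟩ := exists_mem_cycClass hord hf hα hρ
        exact (binCorr_admissible_sums hord hf hnf hTab hpqrs hk hρk).2
    have hsign := neg_one_pow_val e0
    split_ifs at hsign <;> rcases hsum with h | h <;> rw [hsign, h] <;> norm_num

theorem stmt10_general (n f : ℕ) (hp : n.Prime) (hnf : n = 4 * f + 1)
    (x y : ℤ) (hy : y = -1)
    (α : ZMod n) (hα : ∀ z : ZMod n, z ≠ 0 → ∃ k : ℕ, z = α ^ k)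
    (hTab : ∀ i < 4, ∀ j < 4, 16 * (cycNum n f α i j : ℤ) = oddTable16 (n : ℤ) x y i j)
    (e0 e1 e2 : ZMod 2) (he : e0 + e1 + e2 = 0)
    (a0 a1 a2 a3 : ZMod n → ZMod 2)
    (ha : (a0, a1, a2, a3) ∈
      ({(cycSeq n f α 0 2, cycSeq n f α 0 1, cycSeq n f α 0 2, cycSeq n f α 0 1),
        (cycSeq n f α 0 1, cycSeq n f α 0 2, cycSeq n f α 0 1, cycSeq n f α 0 2),
        (cycSeq n f α 2 3, cycSeq n f α 0 2, cycSeq n f α 2 3, cycSeq n f α 0 2),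
        (cycSeq n f α 0 2, cycSeq n f α 2 3, cycSeq n f α 0 2, cycSeq n f α 2 3),
        (cycSeq n f α 1 3, cycSeq n f α 1 2, cycSeq n f α 1 3, cycSeq n f α 1 2),
        (cycSeq n f α 1 2, cycSeq n f α 1 3, cycSeq n f α 1 2, cycSeq n f α 1 3),
        (cycSeq n f α 0 3, cycSeq n f α 1 3, cycSeq n f α 0 3, cycSeq n f α 1 3),
        (cycSeq n f α 1 3, cycSeq n f α 0 3, cycSeq n f α 1 3, cycSeq n f α 0 3)} :
        Set ((ZMod n → ZMod 2) × (ZMod n → ZMod 2) × (ZMod n → ZMod 2) × (ZMod n → ZMod 2))))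
    (u : ZMod (2 * n) → ZMod 4) (hu : u = constructionI n a0 a1 a2 a3 e0 e1 e2) :
    ∀ τ : ℕ, 1 ≤ τ → τ < 2 * n →
      quadCorr (2 * n) u u ((τ : ℕ) : ZMod (2 * n)) = 2 ∨
        quadCorr (2 * n) u u ((τ : ℕ) : ZMod (2 * n)) = -2 := by
  intro τ hτ1 hτ2
  have : Fact n.Prime := ⟨hp⟩
  have hf : 0 < f := Nat.pos_of_ne_zero fun h => Nat.not_prime_one (by rwa [hnf, h] at hp)
  have hord : orderOf α = 4 * f := by
    rw [orderOf_eq_sub_one_of_forall_eq_pow (by omega) hα, hnf, Nat.add_sub_cancel]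
  subst hy hu
  simp only [Set.mem_insert_iff, Set.mem_singleton_iff, Prod.mk.injEq] at ha
  rcases ha with h | h | h | h | h | h | h | h <;> obtain ⟨rfl, rfl, rfl, rfl⟩ := h <;>
  exact quadCorr_constructionI_cycSeq hord hf hnf hα hTab (by simp [admissibleIndices]) he hτ1 hτ2

theorem stmt10 (n f : ℕ) (hp : n.Prime) (hnf : n = 4 * f + 1) (hf : Odd f)
    (x y : ℤ) (hxy : (n : ℤ) = x ^ 2 + 4 * y ^ 2) (hy : y = -1)
    (α : ZMod n) (hα : ∀ z : ZMod n, z ≠ 0 → ∃ k : ℕ, z = α ^ k)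
    (hTab : ∀ i < 4, ∀ j < 4, 16 * (cycNum n f α i j : ℤ) = oddTable16 (n : ℤ) x y i j)
    (e0 e1 e2 : ZMod 2) (he : e0 + e1 + e2 = 0)
    (a0 a1 a2 a3 : ZMod n → ZMod 2)
    (ha : (a0, a1, a2, a3) ∈
      ({(cycSeq n f α 0 2, cycSeq n f α 0 1, cycSeq n f α 0 2, cycSeq n f α 0 1),
        (cycSeq n f α 0 1, cycSeq n f α 0 2, cycSeq n f α 0 1, cycSeq n f α 0 2),
        (cycSeq n f α 2 3, cycSeq n f α 0 2, cycSeq n f α 2 3, cycSeq n f α 0 2),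
        (cycSeq n f α 0 2, cycSeq n f α 2 3, cycSeq n f α 0 2, cycSeq n f α 2 3),
        (cycSeq n f α 1 3, cycSeq n f α 1 2, cycSeq n f α 1 3, cycSeq n f α 1 2),
        (cycSeq n f α 1 2, cycSeq n f α 1 3, cycSeq n f α 1 2, cycSeq n f α 1 3),
        (cycSeq n f α 0 3, cycSeq n f α 1 3, cycSeq n f α 0 3, cycSeq n f α 1 3),
        (cycSeq n f α 1 3, cycSeq n f α 0 3, cycSeq n f α 1 3, cycSeq n f α 0 3)} :
        Set ((ZMod n → ZMod 2) × (ZMod n → ZMod 2) × (ZMod n → ZMod 2) × (ZMod n → ZMod 2))))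
    (u : ZMod (2 * n) → ZMod 4) (hu : u = constructionI n a0 a1 a2 a3 e0 e1 e2) :
    ∀ τ : ℕ, 1 ≤ τ → τ < 2 * n →
      quadCorr (2 * n) u u ((τ : ℕ) : ZMod (2 * n)) = 2 ∨
        quadCorr (2 * n) u u ((τ : ℕ) : ZMod (2 * n)) = -2 :=
  stmt10_general n f hp hnf x y hy α hα hTab e0 e1 e2 he a0 a1 a2 a3 ha u hu
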